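/- Let r ≥ 1 and let f: {0,1}^r → {0,1} satisfy Pr_{x uniform}[f(x) ≠ PAR_r(x)] = η. Then for all δ ∈ [0,1]: NS_{1−2δ}(f) ≤ (1−2η)²·(1−2δ)^r + 4η(1−η). -/

import Mathlib

/-! Let `s = boolSign ∘ f` and let `χ` be the parity character. Noise stability is the average,
against the noise weights, of the autocorrelation `z ↦ 𝔼ₓ s(x) s(x + z)`. Writing
`s = χ · (μ + h)` with `μ = 𝔼 χ s = 1 - 2η` and `h` of mean zero, the autocorrelation of `s` at
`z` is `χ(z) (μ² + 𝔼ₓ h(x) h(x + z))`. The noise weights average `χ` to `ρ^r`, and by AM–GM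
`|𝔼ₓ h(x) h(x + z)| ≤ 𝔼 h² = 1 - μ² = 4η(1 - η)`. -/

def wt {n : ℕ} (x : Fin n → Bool) : ℕ :=
  (Finset.univ.filter (fun i => x i = true)).card

/-- Noise stability `NS_η(f) = 1 - 2 Pr[f(x) ≠ f(y)]` where `x` is uniform and `y` is
`η`-correlated with `x`: here `z` records which coordinates are flipped, each coordinate
being flipped independently with probability `(1 - η)/2`. -/
noncomputable def noiseStability {n : ℕ} (η : ℝ) (f : (Fin n → Bool) → Bool) : ℝ :=
  1 - 2 * ∑ x : Fin n → Bool, ∑ z : Fin n → Bool,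
      ((2 ^ n : ℝ))⁻¹ * (∏ i : Fin n, if z i then (1 - η) / 2 else (1 + η) / 2) *
        (if f x ≠ f (fun i => xor (x i) (z i)) then 1 else 0)

/-- `PAR_r(x) = x_1 ⊕ ⋯ ⊕ x_r`: parity of the Hamming weight. -/
def parityFn {r : ℕ} (x : Fin r → Bool) : Bool := decide (Odd (wt x))

open Finset
open scoped BigOperators

section Autocorrelation

variable {G : Type*} [AddCommGroup G] [Fintype G]

lemma AddChar.abs_apply_eq_one_of_real (ψ : AddChar G ℝ) (x : G) : |ψ x| = 1 := by
  refine (pow_eq_one_iff_of_nonneg (abs_nonneg _) (Fintype.card_ne_zero (α := G))).mp ?_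
  rw [← abs_pow, ← ψ.map_nsmul_eq_pow, card_nsmul_eq_zero, ψ.map_zero_eq_one, abs_one]

lemma AddChar.sq_apply_eq_one_of_real (ψ : AddChar G ℝ) (x : G) : ψ x ^ 2 = 1 := by
  rw [← sq_abs, ψ.abs_apply_eq_one_of_real, one_pow]

noncomputable def autocorr (F : G → ℝ) (z : G) : ℝ := 𝔼 x, F x * F (x + z)

lemma expect_comp_add_right (F : G → ℝ) (z : G) : 𝔼 x, F (x + z) = 𝔼 x, F x :=
  Fintype.expect_equiv (Equiv.addRight z) _ _ fun _ => rfl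

lemma abs_autocorr_le (F : G → ℝ) (z : G) : |autocorr F z| ≤ 𝔼 x, F x ^ 2 := by
  have hsym : 𝔼 x, F x ^ 2 = 𝔼 x, (F x ^ 2 + F (x + z) ^ 2) / 2 := by
    rw [← expect_div, expect_add_distrib, expect_comp_add_right (fun x => F x ^ 2)]; ring
  rw [abs_le, autocorr, hsym, ← expect_neg_distrib]
  constructor <;> refine expect_le_expect fun x _ => ?_
  · nlinarith [sq_nonneg (F x + F (x + z))]
  · nlinarith [sq_nonneg (F x - F (x + z))]

lemma autocorr_const_add (c : ℝ) {F : G → ℝ} (hF : 𝔼 x, F x = 0) (z : G) :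
    autocorr (fun x => c + F x) z = c ^ 2 + autocorr F z := by
  have hexpand : ∀ x, (c + F x) * (c + F (x + z))
      = c ^ 2 + c * F x + c * F (x + z) + F x * F (x + z) := fun x => by ring
  simp only [autocorr, hexpand, expect_add_distrib, ← mul_expect, expect_comp_add_right F, hF,
    Fintype.expect_const]
  ring

lemma autocorr_addChar_mul (ψ : AddChar G ℝ) (F : G → ℝ) (z : G) :
    autocorr (fun x => ψ x * F x) z = ψ z * autocorr F z := by
  rw [autocorr, autocorr, mul_expect]
  refine expect_congr rfl fun x _ => ?_
  rw [ψ.map_add_eq_mul]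
  linear_combination (ψ z * F x * F (x + z)) * ψ.sq_apply_eq_one_of_real x

theorem sum_mul_autocorr_le (ψ : AddChar G ℝ) {F : G → ℝ} (hF : ∀ x, F x ^ 2 = 1)
    {w : G → ℝ} (hw : ∀ z, 0 ≤ w z) (hw₁ : ∑ z, w z = 1) :
    ∑ z, w z * autocorr F z
      ≤ (𝔼 x, ψ x * F x) ^ 2 * ∑ z, w z * ψ z + (1 - (𝔼 x, ψ x * F x) ^ 2) := by
  set μ := 𝔼 x, ψ x * F x
  set h : G → ℝ := fun x => ψ x * F x - μ
  have hF_eq : F = fun x => ψ x * (μ + h x) := funext fun x => by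
    linear_combination (-F x) * ψ.sq_apply_eq_one_of_real x
  have hmean : 𝔼 x, h x = 0 := by simp [h, expect_sub_distrib, μ]
  have hvar : 𝔼 x, h x ^ 2 = 1 - μ ^ 2 := by
    have hsq : ∀ x, h x ^ 2 = 1 - 2 * μ * (ψ x * F x) + μ ^ 2 := fun x => by
      simp only [h]
      linear_combination ψ x ^ 2 * hF x + ψ.sq_apply_eq_one_of_real x
    simp only [hsq, expect_add_distrib, expect_sub_distrib, ← mul_expect, Fintype.expect_const]
    ring
  have hcorr : ∀ z, autocorr F z = ψ z * μ ^ 2 + ψ z * autocorr h z := fun z => by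
    rw [hF_eq, autocorr_addChar_mul, autocorr_const_add _ hmean]; ring
  calc ∑ z, w z * autocorr F z
      = μ ^ 2 * ∑ z, w z * ψ z + ∑ z, w z * (ψ z * autocorr h z) := by
        rw [mul_sum, ← sum_add_distrib]
        exact sum_congr rfl fun z _ => by rw [hcorr]; ring
    _ ≤ μ ^ 2 * ∑ z, w z * ψ z + ∑ z, w z * (1 - μ ^ 2) := by
        gcongr with z
        · exact hw z
        calc ψ z * autocorr h z ≤ |ψ z * autocorr h z| := le_abs_self _
          _ = |autocorr h z| := by
            rw [abs_mul, ψ.abs_apply_eq_one_of_real, one_mul]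
          _ ≤ 1 - μ ^ 2 := hvar ▸ abs_autocorr_le h z
    _ = μ ^ 2 * ∑ z, w z * ψ z + (1 - μ ^ 2) := by rw [← sum_mul, hw₁, one_mul]

end Autocorrelation

def boolSign : AddChar Bool ℝ where
  toFun b := if b then -1 else 1
  map_zero_eq_one' := rfl
  map_add_eq_mul' a b := by cases a <;> cases b <;> norm_num [Bool.add_eq_xor]

lemma boolSign_mul_boolSign (a b : Bool) :
    boolSign a * boolSign b = 1 - 2 * if a ≠ b then 1 else 0 := by
  cases a <;> cases b <;> norm_num [boolSign]

lemma expect_boolSign_mul_boolSign {α : Type*} [Fintype α] [Nonempty α] (f g : α → Bool) :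
    𝔼 x, boolSign (f x) * boolSign (g x)
      = 1 - 2 * (#{x | f x ≠ g x} : ℝ) / Fintype.card α := by
  simp only [boolSign_mul_boolSign, expect_sub_distrib, ← mul_expect, Fintype.expect_const]
  rw [Fintype.expect_eq_sum_div_card, sum_boole]
  ring

section Cube

variable {n : ℕ}

lemma card_cube : (Fintype.card (Fin n → Bool) : ℝ) = 2 ^ n := by simp

def parityChar (n : ℕ) : AddChar (Fin n → Bool) ℝ where
  toFun x := ∏ i, boolSign (x i)
  map_zero_eq_one' := by simp
  map_add_eq_mul' x y := by simp [AddChar.map_add_eq_mul, prod_mul_distrib]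

lemma parityChar_apply (x : Fin n → Bool) : parityChar n x = boolSign (parityFn x) := by
  change ∏ i, boolSign (x i) = boolSign (decide (Odd (wt x)))
  simp only [boolSign, AddChar.coe_mk, prod_ite, prod_const, one_pow, mul_one, wt,
    neg_one_pow_eq_ite, decide_eq_true_eq, ← Nat.not_even_iff_odd, ite_not]

noncomputable def noiseWeight (ρ : ℝ) (z : Fin n → Bool) : ℝ :=
  ∏ i, if z i then (1 - ρ) / 2 else (1 + ρ) / 2

lemma noiseWeight_nonneg {ρ : ℝ} (hρ : |ρ| ≤ 1) (z : Fin n → Bool) :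
    0 ≤ noiseWeight ρ z := by
  have := abs_le.mp hρ
  exact prod_nonneg fun i _ => by split_ifs <;> linarith

lemma sum_noiseWeight (ρ : ℝ) : ∑ z : Fin n → Bool, noiseWeight ρ z = 1 := by
  refine (Fintype.prod_sum fun _ (b : Bool) =>
    if b then (1 - ρ) / 2 else (1 + ρ) / 2).symm.trans ?_
  norm_num [← add_div]

lemma sum_noiseWeight_mul_parityChar (ρ : ℝ) :
    ∑ z, noiseWeight ρ z * parityChar n z = ρ ^ n := by
  change ∑ z : Fin n → Bool, (∏ i, _) * ∏ i, boolSign (z i) = _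
  simp only [← prod_mul_distrib]
  refine (Fintype.prod_sum fun _ (b : Bool) =>
    (if b then (1 - ρ) / 2 else (1 + ρ) / 2) * boolSign b).symm.trans ?_
  norm_num [boolSign]
  ring

lemma noiseStability_eq_sum_noiseWeight_mul_autocorr (ρ : ℝ) (f : (Fin n → Bool) → Bool) :
    noiseStability ρ f = ∑ z, noiseWeight ρ z * autocorr (fun x => boolSign (f x)) z := by
  have hflip : noiseStability ρ f
      = 1 - 2 * ∑ z, noiseWeight ρ z * #{x | f x ≠ f (x + z)} / 2 ^ n := by
    rw [noiseStability, sum_comm]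
    congr 2
    refine sum_congr rfl fun z _ => ?_
    rw [← mul_sum, sum_boole]
    change (2 ^ n : ℝ)⁻¹ * noiseWeight ρ z * (#{x | f x ≠ f (x + z)} : ℝ) = _
    ring
  simp only [hflip, autocorr, expect_boolSign_mul_boolSign, card_cube, mul_sub, mul_one,
    sum_sub_distrib, sum_noiseWeight, mul_sum]
  refine congrArg (1 - ·) (sum_congr rfl fun z _ => by ring)

end Cube

theorem stmt15_general (r : ℕ) (f : (Fin r → Bool) → Bool) (η : ℝ)
    (hη : ((Finset.univ.filter (fun x : Fin r → Bool => f x ≠ parityFn x)).card : ℝ) / 2 ^ r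
      = η)
    (δ : ℝ) (h0 : 0 ≤ δ) (h1 : δ ≤ 1) :
    noiseStability (1 - 2 * δ) f
      ≤ (1 - 2 * η) ^ 2 * (1 - 2 * δ) ^ r + 4 * η * (1 - η) := by
  have hρ : |1 - 2 * δ| ≤ 1 := abs_le.mpr ⟨by linarith, by linarith⟩
  have hμ : 𝔼 x, parityChar r x * boolSign (f x) = 1 - 2 * η := by
    simp only [parityChar_apply, expect_boolSign_mul_boolSign, card_cube, ← hη, ne_comm]
    ring
  have hbound := sum_mul_autocorr_le (parityChar r)
    (fun x => boolSign.sq_apply_eq_one_of_real (f x)) (noiseWeight_nonneg hρ) (sum_noiseWeight _)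
  rw [hμ, sum_noiseWeight_mul_parityChar] at hbound
  rw [noiseStability_eq_sum_noiseWeight_mul_autocorr]
  linarith

/-- If `f : {0,1}^r → {0,1}` disagrees with `PAR_r` with probability exactly `η`, then
for all `δ ∈ [0,1]`, `NS_{1-2δ}(f) ≤ (1-2η)² (1-2δ)^r + 4η(1-η)`. -/
theorem stmt15 (r : ℕ) (hr : 1 ≤ r) (f : (Fin r → Bool) → Bool) (η : ℝ)
    (hη : ((Finset.univ.filter (fun x : Fin r → Bool => f x ≠ parityFn x)).card : ℝ) / 2 ^ r
      = η)
    (δ : ℝ) (h0 : 0 ≤ δ) (h1 : δ ≤ 1) :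
    noiseStability (1 - 2 * δ) f
      ≤ (1 - 2 * η) ^ 2 * (1 - 2 * δ) ^ r + 4 * η * (1 - η) :=
  stmt15_general r f η hη δ h0 h1
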